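/- arXiv:1201.3778 — 4 statements merged into one kernel-verified Lean document; each statement's English description precedes it below -/
import Mathlib

section
/- Let G be a finite simple graph with n vertices and average degree d. Define ES_m(G) as the expected size, over a uniformly random ordered choice of the vertices, of the greedy independent set among the first m vertices (a vertex is included iff it precedes all its neighbors among those chosen). Then ES_m(G) ≥ ES_m(K^n_d), where K^n_d is the disjoint union of n/(d+1) cliques of size d+1 (assuming (d+1) | n). -/
/-!
Splitting `|IS_m(G, π)|` into indicators and exchanging the sums, `∑_π |IS_m(G, π)|` becomes
`(n - 1)! * ∑_v W(d_v)` with `W(k) = ∑_{c < m} C(n - 1 - k, c) / C(n - 1, c)`: a vertex of degree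
`k` at position `c` is taken exactly when its `k` neighbours occupy later positions. By Pascal's
rule each summand is a convex function of `k ∈ ℕ`, so the supporting line of `W` at the average
degree `d` gives `∑_v W(d_v) ≥ n * W(d)`, and `W(d)` is the product formula for `ES_m(K^n_d)`.
-/

open Finset Equiv
open scoped Nat

theorem add_mul_sub_le_of_monotone_sub {f : ℕ → ℝ} (hf : Monotone fun k => f (k + 1) - f k)
    (d a : ℕ) : f d + ((a : ℝ) - d) * (f (d + 1) - f d) ≤ f a := by
  rcases le_total d a with h | h
  · obtain ⟨j, rfl⟩ := Nat.exists_eq_add_of_le h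
    clear h
    induction j with
    | zero => simp
    | succ j ih =>
      have hΔ : f (d + 1) - f d ≤ f (d + j + 1) - f (d + j) := hf (Nat.le_add_right d j)
      rw [show d + (j + 1) = d + j + 1 by ring]
      push_cast at ih ⊢
      linarith
  · obtain ⟨j, rfl⟩ := Nat.exists_eq_add_of_le h
    clear h
    induction j with
    | zero => simp
    | succ j ih =>
      have hΔ : f (a + j + 1) - f (a + j) ≤ f (a + j + 1 + 1) - f (a + j + 1) :=
        hf (Nat.le_succ _)
      rw [show a + (j + 1) = a + j + 1 by ring]
      push_cast at ih ⊢
      nlinarith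

theorem card_mul_le_sum_of_monotone_sub {ι : Type*} {f : ℕ → ℝ}
    (hf : Monotone fun k => f (k + 1) - f k) (s : Finset ι) (x : ι → ℕ) (d : ℕ)
    (hx : ∑ i ∈ s, x i = #s * d) : #s * f d ≤ ∑ i ∈ s, f (x i) := by
  have hx' : ∑ i ∈ s, ((x i : ℝ) - d) = 0 := by
    rw [sum_sub_distrib, ← Nat.cast_sum, hx, sum_const, nsmul_eq_mul]
    push_cast
    ring
  calc (#s : ℝ) * f d = ∑ i ∈ s, (f d + ((x i : ℝ) - d) * (f (d + 1) - f d)) := by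
        rw [sum_add_distrib, ← sum_mul, hx', sum_const, nsmul_eq_mul]
        ring
    _ ≤ ∑ i ∈ s, f (x i) := sum_le_sum fun i _ => add_mul_sub_le_of_monotone_sub hf d (x i)

theorem card_equiv_filter_eqOn {α β : Type*} [Fintype α] [Fintype β] [DecidableEq α]
    [DecidableEq β] (h : Fintype.card α = Fintype.card β) (S : Finset α) (g : α → β)
    (hg : Set.InjOn g S) [DecidablePred fun f : α ≃ β => ∀ a ∈ S, f a = g a] :
    #{f : α ≃ β | ∀ a ∈ S, f a = g a} = (Fintype.card α - #S)! := by
  classical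
  have e : {f : α ≃ β // ∀ a ∈ S, f a = g a}
      ≃ (((↑S : Set α)ᶜ : Set α) ≃ ((g '' S)ᶜ : Set β)) := by
    refine (subtypeEquivRight fun f => ?_).trans (Equiv.Set.compl (Set.imageOfInjOn g S hg))
    exact ⟨fun hf x => by simpa [Set.imageOfInjOn] using hf x x.2,
      fun hf a ha => by simpa [Set.imageOfInjOn] using hf ⟨a, ha⟩⟩
  have hα : Fintype.card ((↑S : Set α)ᶜ : Set α) = Fintype.card α - #S := by
    rw [Fintype.card_compl_set]
    simp
  have hβ : Fintype.card ((g '' S)ᶜ : Set β) = Fintype.card α - #S := by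
    rw [Fintype.card_compl_set, ← h, Set.card_image_of_inj_on hg]
    simp
  rw [← Fintype.card_subtype, Fintype.card_congr e,
    Fintype.card_equiv (Fintype.equivOfCardEq (hα.trans hβ.symm)), hα]

theorem card_filter_injective_forall_mem {γ β : Type*} [Fintype γ] [Fintype β] [DecidableEq γ]
    [DecidableEq β] (T : Finset β) :
    #{g : γ → β | Function.Injective g ∧ ∀ x, g x ∈ T} = (#T).descFactorial (Fintype.card γ) := by
  have e : {g : γ → β // Function.Injective g ∧ ∀ x, g x ∈ T} ≃ (γ ↪ T) :=
    { toFun g := ⟨fun x => ⟨g.1 x, g.2.2 x⟩, fun a b hab => g.2.1 (congrArg Subtype.val hab)⟩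
      invFun e := ⟨fun x => e x, fun a b hab => e.injective (Subtype.ext hab), fun x => (e x).2⟩
      left_inv _ := rfl
      right_inv _ := rfl }
  rw [← Fintype.card_subtype, Fintype.card_congr e, Fintype.card_embedding_eq, Fintype.card_coe]

theorem card_perm_apply_eq_and_forall_lt {n : ℕ} {v : Fin n} {N : Finset (Fin n)} (hv : v ∉ N)
    (c : Fin n) :
    #{π : Perm (Fin n) | π v = c ∧ ∀ u ∈ N, c < π u}
      = (n - 1 - c).descFactorial #N * (n - 1 - #N)! := by
  set s : Finset (Perm (Fin n)) := {π | π v = c ∧ ∀ u ∈ N, c < π u}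
  set t : Finset (N → Fin n) := {g | Function.Injective g ∧ ∀ u, g u ∈ Ioi c}
  have hmaps : ∀ π ∈ s, (fun u : N => π u) ∈ t := by
    intro π hπ
    simp only [s, t, mem_filter, mem_univ, true_and, mem_Ioi] at hπ ⊢
    exact ⟨fun a b hab => Subtype.ext (π.injective hab), fun u => hπ.2 u u.2⟩
  rw [card_eq_sum_card_fiberwise hmaps, sum_const_nat (m := (n - 1 - #N)!),
    card_filter_injective_forall_mem, Fintype.card_coe, Fin.card_Ioi]
  intro g hg
  simp only [t, mem_filter, mem_univ, true_and, mem_Ioi] at hg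
  -- On the fibre over `g`, the values of `π` on `insert v N` are prescribed by `ext`.
  let ext : Fin n → Fin n := fun a => if h : a ∈ N then g ⟨a, h⟩ else c
  have hext_v : ext v = c := dif_neg hv
  have hext_N : ∀ u (hu : u ∈ N), ext u = g ⟨u, hu⟩ := fun u hu => dif_pos hu
  have hinj : Set.InjOn ext ↑(insert v N) := by
    intro a ha b hb hab
    simp only [coe_insert, Set.mem_insert_iff, mem_coe] at ha hb
    rcases ha with rfl | ha <;> rcases hb with rfl | hb
    · rfl
    · exact ((hg.2 ⟨b, hb⟩).ne (hext_v.symm.trans (hab.trans (hext_N b hb)))).elim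
    · exact ((hg.2 ⟨a, ha⟩).ne' ((hext_N a ha).symm.trans (hab.trans hext_v))).elim
    · rw [hext_N a ha, hext_N b hb] at hab
      exact congrArg Subtype.val (hg.1 hab)
  have hfiber : {π ∈ s | (fun u : N => π u) = g}
      = ({π : Perm (Fin n) | ∀ a ∈ insert v N, π a = ext a} : Finset _) := by
    ext π
    simp only [s, mem_filter, mem_univ, true_and, forall_mem_insert, hext_v, funext_iff]
    constructor
    · rintro ⟨⟨hπv, -⟩, hπg⟩
      exact ⟨hπv, fun u hu => (hπg ⟨u, hu⟩).trans (hext_N u hu).symm⟩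
    · rintro ⟨hπv, hπN⟩
      refine ⟨⟨hπv, fun u hu => ?_⟩, fun u => (hπN u u.2).trans (hext_N u u.2)⟩
      rw [hπN u hu, hext_N u hu]
      exact hg.2 ⟨u, hu⟩
  rw [hfiber]
  refine (card_equiv_filter_eqOn rfl _ ext hinj).trans ?_
  rw [card_insert_of_notMem hv, Fintype.card_fin, Nat.sub_add_eq, Nat.sub_right_comm]

theorem card_perm_lt_and_forall_lt {n m : ℕ} (hmn : m ≤ n) {v : Fin n} {N : Finset (Fin n)}
    (hv : v ∉ N) :
    #{π : Perm (Fin n) | (π v : ℕ) < m ∧ ∀ u ∈ N, (π v : ℕ) < π u}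
      = ∑ c ∈ range m, (n - 1 - c).descFactorial #N * (n - 1 - #N)! := by
  rw [card_eq_sum_card_fiberwise (f := fun π => (π v : ℕ)) (t := range m)
    fun π hπ => mem_range.mpr (mem_filter.mp hπ).2.1]
  refine sum_congr rfl fun c hc => ?_
  rw [← card_perm_apply_eq_and_forall_lt hv ⟨c, (mem_range.mp hc).trans_le hmn⟩]
  congr 1
  ext π
  simp only [mem_filter, mem_univ, true_and, Fin.ext_iff, Fin.lt_def]
  constructor
  · rintro ⟨⟨-, hlt⟩, rfl⟩
    exact ⟨rfl, hlt⟩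
  · rintro ⟨hπv, hlt⟩
    exact ⟨⟨hπv ▸ mem_range.mp hc, hπv ▸ hlt⟩, hπv⟩

theorem descFactorial_mul_factorial_mul_choose {N k c : ℕ} (hk : k ≤ N) (hc : c ≤ N) :
    (N - c).descFactorial k * (N - k)! * N.choose c = N ! * (N - k).choose c := by
  rcases le_or_gt (k + c) N with h | h
  · refine Nat.eq_of_mul_eq_mul_right (Nat.mul_pos c.factorial_pos (N - c - k).factorial_pos) ?_
    have h1 := Nat.factorial_mul_descFactorial (show k ≤ N - c by omega)
    have h2 := Nat.choose_mul_factorial_mul_factorial hc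
    have h3 := Nat.choose_mul_factorial_mul_factorial (show c ≤ N - k by omega)
    rw [show N - k - c = N - c - k by omega] at h3
    calc _ = ((N - c - k)! * (N - c).descFactorial k) * (N.choose c * c !) * (N - k)! := by ring
      _ = N ! * (N - k)! := by rw [h1, ← h2]; ring
      _ = _ := by rw [← h3]; ring
  · rw [Nat.descFactorial_of_lt (by omega),
      Nat.choose_eq_zero_of_lt (n := N - k) (k := c) (by omega)]
    simp

-- `greedyWeight (n - 1) m k / n` is the probability that a vertex of degree `k` lies in `IS_m`.
noncomputable def greedyWeight (N m k : ℕ) : ℝ :=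
  ∑ c ∈ range m, ((N - k).choose c : ℝ) / N.choose c

theorem card_perm_lt_and_forall_lt_eq_greedyWeight {n m : ℕ} (hmn : m ≤ n) {v : Fin n}
    {N : Finset (Fin n)} (hv : v ∉ N) :
    (#{π : Perm (Fin n) | (π v : ℕ) < m ∧ ∀ u ∈ N, (π v : ℕ) < π u} : ℝ)
      = (n - 1)! * greedyWeight (n - 1) m #N := by
  have hN : #N ≤ n - 1 := by
    have := card_lt_univ_of_notMem hv
    rw [Fintype.card_fin] at this
    omega
  rw [card_perm_lt_and_forall_lt hmn hv, greedyWeight, Nat.cast_sum, mul_sum]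
  refine sum_congr rfl fun c hc => ?_
  have hc : c ≤ n - 1 := by have := mem_range.mp hc; omega
  have hpos : (0 : ℝ) < (n - 1).choose c := by exact_mod_cast Nat.choose_pos hc
  rw [mul_div_assoc', eq_div_iff hpos.ne']
  exact_mod_cast descFactorial_mul_factorial_mul_choose hN hc

theorem two_mul_choose_succ_le (j c : ℕ) :
    2 * (j + 1).choose c ≤ (j + 2).choose c + j.choose c := by
  cases c with
  | zero => simp
  | succ c =>
    have : j.choose c ≤ (j + 1).choose c := Nat.choose_le_choose c (Nat.le_succ j)
    rw [Nat.choose_succ_succ' (j + 1), Nat.choose_succ_succ' j]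
    omega

-- Thanks to truncated subtraction, `k ↦ (N - k).choose c` is convex on all of `ℕ`.
theorem two_mul_choose_tsub_succ_le (N c k : ℕ) :
    2 * (N - (k + 1)).choose c ≤ (N - k).choose c + (N - (k + 2)).choose c := by
  rcases Nat.lt_or_ge N (k + 2) with h | h
  · have h0 : N - (k + 1) = 0 := by omega
    have h0' : N - (k + 2) = 0 := by omega
    have := Nat.choose_le_choose c (Nat.zero_le (N - k))
    rw [h0, h0']
    omega
  · have := two_mul_choose_succ_le (N - (k + 2)) c
    rw [show N - (k + 2) + 1 = N - (k + 1) by omega, show N - (k + 2) + 2 = N - k by omega] at this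
    omega

theorem greedyWeight_monotone_sub (N m : ℕ) :
    Monotone fun k => greedyWeight N m (k + 1) - greedyWeight N m k := by
  refine monotone_nat_of_le_succ fun k => ?_
  simp only [greedyWeight, ← sum_sub_distrib]
  refine sum_le_sum fun c _ => ?_
  have h : (2 * (N - (k + 1)).choose c : ℝ)
      ≤ (N - k).choose c + (N - (k + 1 + 1)).choose c := by
    exact_mod_cast two_mul_choose_tsub_succ_le N c k
  have hpos : (0 : ℝ) ≤ N.choose c := Nat.cast_nonneg _
  rw [div_sub_div_same, div_sub_div_same]
  exact div_le_div_of_nonneg_right (by linarith) hpos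

theorem prod_sub_sub_eq_descFactorial {n d : ℕ} (hd : d < n) (c : ℕ) :
    ∏ i ∈ Icc 1 c, ((n : ℝ) - i - d) = (n - 1 - d).descFactorial c := by
  rw [← descPochhammer_eval_eq_descFactorial ℝ, descPochhammer_eval_eq_prod_range,
    ← Ico_add_one_right_eq_Icc, prod_Ico_eq_prod_range, add_tsub_cancel_right,
    Nat.cast_sub (by omega : d ≤ n - 1), Nat.cast_sub (by omega : 1 ≤ n)]
  refine prod_congr rfl fun j _ => ?_
  push_cast
  ring

theorem prod_sub_sub_div_sub_eq_choose_div_choose {n d : ℕ} (hd : d < n) (c : ℕ) :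
    ∏ i ∈ Icc 1 c, (((n : ℝ) - i - d) / ((n : ℝ) - i))
      = ((n - 1 - d).choose c : ℝ) / (n - 1).choose c := by
  have h0 := prod_sub_sub_eq_descFactorial (n := n) (d := 0) (by omega) c
  simp only [CharP.cast_eq_zero, sub_zero, Nat.sub_zero] at h0
  rw [prod_div_distrib, prod_sub_sub_eq_descFactorial hd, h0,
    Nat.descFactorial_eq_factorial_mul_choose, Nat.descFactorial_eq_factorial_mul_choose]
  push_cast
  exact mul_div_mul_left _ _ (by positivity)

theorem SimpleGraph.lt_card_of_sum_degree_eq {V : Type*} [Fintype V] [Nonempty V]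
    (G : SimpleGraph V) [DecidableRel G.Adj] {d : ℕ}
    (hd : ∑ v, G.degree v = Fintype.card V * d) : d < Fintype.card V := by
  refine Nat.lt_of_mul_lt_mul_left (a := Fintype.card V) ?_
  calc Fintype.card V * d = ∑ v, G.degree v := hd.symm
    _ < ∑ _v : V, Fintype.card V := sum_lt_sum_of_nonempty univ_nonempty
        fun v _ => G.degree_lt_card_verts v
    _ = Fintype.card V * Fintype.card V := by simp

theorem sum_card_greedy_eq {n m : ℕ} (hmn : m ≤ n) (G : SimpleGraph (Fin n))
    [DecidableRel G.Adj] :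
    ∑ π : Perm (Fin n),
        (#{v | (π v : ℕ) < m ∧ ∀ u ∈ G.neighborFinset v, (π v : ℕ) < π u} : ℝ)
      = (n - 1)! * ∑ v, greedyWeight (n - 1) m (G.degree v) := by
  have hswap :
      ∑ π : Perm (Fin n), #{v | (π v : ℕ) < m ∧ ∀ u ∈ G.neighborFinset v, (π v : ℕ) < π u}
        = ∑ v, #{π : Perm (Fin n) | (π v : ℕ) < m ∧ ∀ u ∈ G.neighborFinset v, (π v : ℕ) < π u} :=
    sum_card_bipartiteAbove_eq_sum_card_bipartiteBelow _
  rw [← Nat.cast_sum, hswap, Nat.cast_sum, mul_sum]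
  exact sum_congr rfl fun v _ =>
    card_perm_lt_and_forall_lt_eq_greedyWeight hmn (G.notMem_neighborFinset_self v)

theorem sum_prod_sub_sub_div_sub_eq_greedyWeight {n d : ℕ} (hd : d < n) (m : ℕ) :
    ∑ j ∈ Icc 1 m, ∏ i ∈ Icc 1 (j - 1), (((n : ℝ) - i - d) / ((n : ℝ) - i))
      = greedyWeight (n - 1) m d := by
  rw [← Ico_add_one_right_eq_Icc, sum_Ico_eq_sum_range, add_tsub_cancel_right]
  simp only [add_tsub_cancel_left, prod_sub_sub_div_sub_eq_choose_div_choose hd]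
  rfl

theorem stmt5_general (n d m : ℕ) (hm1 : 1 ≤ m) (hmn : m ≤ n)
    (G : SimpleGraph (Fin n)) [DecidableRel G.Adj]
    (hd : ∑ v : Fin n, G.degree v = n * d) :
    (∑ π : Equiv.Perm (Fin n), ((Finset.univ.filter (fun v : Fin n =>
        (π v : ℕ) < m ∧ ∀ u ∈ G.neighborFinset v, (π v : ℕ) < (π u : ℕ))).card : ℝ))
      / (Nat.factorial n : ℝ)
    ≥ ∑ j ∈ Finset.Icc 1 m, ∏ i ∈ Finset.Icc 1 (j - 1),
        (((n:ℝ) - i - (d : ℝ)) / ((n:ℝ) - i)) := by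
  have hn : 0 < n := by omega
  have : Nonempty (Fin n) := ⟨⟨0, hn⟩⟩
  have hdn : d < n := by simpa using G.lt_card_of_sum_degree_eq (by simpa using hd)
  have hjensen : (n : ℝ) * greedyWeight (n - 1) m d
      ≤ ∑ v, greedyWeight (n - 1) m (G.degree v) := by
    simpa using card_mul_le_sum_of_monotone_sub (greedyWeight_monotone_sub (n - 1) m) univ
      (fun v => G.degree v) d (by simpa using hd)
  rw [sum_card_greedy_eq hmn, sum_prod_sub_sub_div_sub_eq_greedyWeight hdn, ge_iff_le,
    le_div_iff₀ (by positivity), ← Nat.mul_factorial_pred hn.ne', Nat.cast_mul]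
  linarith [mul_le_mul_of_nonneg_left hjensen (Nat.cast_nonneg (α := ℝ) (n - 1)!)]

/-- Extension of Turán's theorem: for a graph `G` on `n` vertices with average degree `d`
(with `(d+1) ∣ n`), the expected greedy independent-set size among the first `m`
vertices of a uniformly random permutation is at least
`ES_m(K^n_d) = ∑_{j=1}^m ∏_{i=1}^{j-1} (n-i-d)/(n-i)`. -/
theorem stmt5 (n d m : ℕ) (hm1 : 1 ≤ m) (hmn : m ≤ n) (hdvd : (d + 1) ∣ n)
    (G : SimpleGraph (Fin n)) [DecidableRel G.Adj]
    (hd : ∑ v : Fin n, G.degree v = n * d) :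
    (∑ π : Equiv.Perm (Fin n), ((Finset.univ.filter (fun v : Fin n =>
        (π v : ℕ) < m ∧ ∀ u ∈ G.neighborFinset v, (π v : ℕ) < (π u : ℕ))).card : ℝ))
      / (Nat.factorial n : ℝ)
    ≥ ∑ j ∈ Finset.Icc 1 m, ∏ i ∈ Finset.Icc 1 (j - 1),
        (((n:ℝ) - i - (d : ℝ)) / ((n:ℝ) - i)) :=
  stmt5_general n d m hm1 hmn G hd
end

section
/- Let G be a finite simple graph with n vertices and average degree d, with (d+1) | n, and let ES_m(G) be the expected greedy independent set size among m uniformly randomly chosen vertices. Define the conflict ratio r̄(m) = 1 − ES_m(G)/m. Then r̄(m) ≤ 1 − (n/(m(d+1))) · (1 − ∏_{i=1}^{m} (n − d − i)/(n + 1 − i)). -/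
/-!
A vertex is picked iff it comes first in its closed neighbourhood and lies among the first `m`
positions. By symmetry among the `δ + 1` vertices of that neighbourhood, a vertex of degree `δ` is
picked by a `1 / (δ + 1)` fraction of the permutations putting part of the neighbourhood among the
first `m` positions; counting by the vertex's position instead writes the same number as a sum
of terms convex in `δ`. Discrete Jensen then shows that, for a fixed degree sum, the expected number
of picks is smallest when every degree equals the average `d`, and for a `d`-regular degree sequence
it is `n / (d + 1) * (1 - ∏ (n - d - i) / (n + 1 - i))`.
-/

open Finset Equiv
open scoped Nat

namespace Nat

theorem succ_mul_descFactorial_add_descFactorial_succ (a k : ℕ) :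
    (k + 1) * a.descFactorial k + a.descFactorial (k + 1) = (a + 1).descFactorial (k + 1) := by
  rw [succ_descFactorial_succ, descFactorial_succ]
  rcases le_or_gt k a with h | h
  · rw [← add_mul]; congr 1; omega
  · simp [descFactorial_eq_zero_iff_lt.mpr h]

theorem succ_mul_sum_descFactorial_add {n m : ℕ} (k : ℕ) (hm : m ≤ n) :
    (k + 1) * ∑ i ∈ range m, (n - 1 - i).descFactorial k + (n - m).descFactorial (k + 1)
      = n.descFactorial (k + 1) := by
  induction m with
  | zero => simp
  | succ m ih =>
    have := succ_mul_descFactorial_add_descFactorial_succ (n - 1 - m) k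
    rw [show n - 1 - m + 1 = n - m by omega] at this
    rw [sum_range_succ, mul_add, ← ih (by omega), show n - (m + 1) = n - 1 - m by omega]
    omega

theorem two_mul_descFactorial_mul_factorial_le {a b j : ℕ} (hab : a ≤ b) (hj : j + 2 ≤ b) :
    2 * (a.descFactorial (j + 1) * (b - (j + 1))!)
      ≤ a.descFactorial (j + 2) * (b - (j + 2))! + a.descFactorial j * (b - j)! := by
  rcases lt_or_ge a (j + 1) with ha | ha
  · rw [descFactorial_eq_zero_iff_lt.mpr ha, descFactorial_eq_zero_iff_lt.mpr (by omega)]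
    simp
  obtain ⟨x, rfl⟩ : ∃ x, a = j + 1 + x := ⟨a - (j + 1), by omega⟩
  obtain ⟨z, rfl⟩ : ∃ z, b = j + 2 + z := ⟨b - (j + 2), by omega⟩
  have h1 : (j + 1 + x).descFactorial (j + 1) = (x + 1) * (j + 1 + x).descFactorial j := by
    rw [descFactorial_succ]; congr 1; omega
  have h2 : (j + 1 + x).descFactorial (j + 2) = x * (j + 1 + x).descFactorial (j + 1) := by
    rw [descFactorial_succ]; congr 1; omega
  have h3 : (j + 2 + z - j)! = (z + 2) * ((z + 1) * z !) := by
    rw [show j + 2 + z - j = z + 2 by omega, factorial_succ, factorial_succ]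
  rw [h2, h1, h3, show j + 2 + z - (j + 1) = z + 1 by omega, factorial_succ,
    show j + 2 + z - (j + 2) = z by omega]
  have key : 2 * ((x + 1) * (z + 1)) ≤ x * (x + 1) + (z + 2) * (z + 1) := by
    -- the two sides differ by `t * (t - 1)`, where `t = b - a`
    obtain ⟨t, ht⟩ : ∃ t, z + 1 = x + t := ⟨z + 1 - x, by omega⟩
    nlinarith [Nat.le_mul_self t]
  convert Nat.mul_le_mul_right ((j + 1 + x).descFactorial j * z !) key using 1 <;> ring

theorem cast_descFactorial_succ_mul_sub {R : Type*} [CommRing R] (a k : ℕ) :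
    ((a + 1).descFactorial (k + 1) : R) * ((a : R) - k) = a.descFactorial (k + 1) * (a + 1) := by
  rcases le_or_gt k a with h | h
  · have := succ_descFactorial a (k + 1)
    rw [show a + 1 - (k + 1) = a - k by omega] at this
    have := congrArg (Nat.cast : ℕ → R) this
    push_cast [h] at this
    linear_combination this
  · rw [descFactorial_eq_zero_iff_lt.mpr (by omega),
      descFactorial_eq_zero_iff_lt.mpr (by omega)]
    simp

end Nat

theorem prod_Icc_sub_div_sub_eq_descFactorial_div {n d m : ℕ} (hm : m ≤ n) (hd : d < n) :
    ∏ i ∈ Icc 1 m, (((n : ℝ) - d - i) / ((n : ℝ) + 1 - i))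
      = (n - m).descFactorial (d + 1) / n.descFactorial (d + 1) := by
  have hD : (n.descFactorial (d + 1) : ℝ) ≠ 0 := by
    exact_mod_cast (Nat.descFactorial_pos.mpr hd).ne'
  induction m with
  | zero => rw [Icc_eq_empty (by omega), prod_empty, Nat.sub_zero, div_self hD]
  | succ m ih =>
    obtain ⟨a, ha⟩ : ∃ a, n - m = a + 1 := ⟨n - m - 1, by omega⟩
    have haR : (n : ℝ) - m = a + 1 := by
      rw [← Nat.cast_sub (by omega), ha]; push_cast; ring
    rw [prod_Icc_succ_top (by omega), ih (by omega), ha, show n - (m + 1) = a by omega,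
      show (n : ℝ) - d - (m + 1 : ℕ) = a - d by push_cast; linarith,
      show (n : ℝ) + 1 - (m + 1 : ℕ) = a + 1 by push_cast; linarith,
      div_mul_div_comm, div_eq_div_iff (by positivity) hD, Nat.cast_descFactorial_succ_mul_sub]
    ring

section PermCounting

variable {α : Type*} [Fintype α] [DecidableEq α]

theorem card_perm_fixing (A : Finset α) :
    #{π : Perm α | ∀ a ∈ A, π a = a} = (Fintype.card α - #A)! := by
  rw [← Fintype.card_subtype]
  have e : {π : Perm α // ∀ a ∈ A, π a = a} ≃ Perm {a // a ∉ A} :=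
    ((subtypeEquivRight fun π => by simp only [not_not]).trans
      (Perm.subtypeEquivSubtypePerm (· ∉ A)).symm)
  rw [Fintype.card_congr e, Fintype.card_perm, Fintype.card_subtype, filter_not,
    filter_mem_eq_inter, univ_inter, card_univ_sdiff]

theorem card_injective_mapsTo (A B : Finset α) :
    #{g : A → α | Function.Injective g ∧ ∀ a, g a ∈ B} = (#B).descFactorial #A := by
  rw [← Fintype.card_subtype, ← Fintype.card_coe A, ← Fintype.card_coe B,
    ← Fintype.card_embedding_eq]
  exact Fintype.card_congr
    { toFun g := ⟨fun a => ⟨g.1 a, g.2.2 a⟩, fun a b hab => g.2.1 (congrArg Subtype.val hab)⟩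
      invFun f := ⟨fun a => f a, fun a b hab => f.injective (Subtype.ext hab), fun a => (f a).2⟩
      left_inv _ := rfl
      right_inv _ := rfl }

/-- The restriction to `A` maps onto the injections `A → B`, with fibres the cosets of the
pointwise stabiliser of `A`. -/
theorem card_perm_mapsTo (A B : Finset α) :
    #{π : Perm α | ∀ a ∈ A, π a ∈ B} = (#B).descFactorial #A * (Fintype.card α - #A)! := by
  set S : Finset (Perm α) := {π | ∀ a ∈ A, π a ∈ B}
  set T : Finset (A → α) := {g | Function.Injective g ∧ ∀ a, g a ∈ B} with hT
  let restrict (π : Perm α) : A → α := fun a => π a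
  have hrestrict : ∀ π ∈ S, restrict π ∈ T := by
    intro π hπ
    simp only [S, T, mem_filter, mem_univ, true_and] at hπ ⊢
    exact ⟨fun a b hab => Subtype.ext (π.injective hab), fun a => hπ a a.2⟩
  have hfiber : ∀ g ∈ T, #{π ∈ S | restrict π = g} = (Fintype.card α - #A)! := by
    intro g hg
    simp only [T, mem_filter, mem_univ, true_and] at hg
    obtain ⟨hinj, hgB⟩ := hg
    set π₀ := (Equiv.ofInjective g hinj).extendSubtype
    have hπ₀ : ∀ a (ha : a ∈ A), π₀ a = g ⟨a, ha⟩ := fun a ha => by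
      simp [π₀, extendSubtype_apply_of_mem _ a ha]
    rw [← card_perm_fixing A]
    refine card_nbij' (π₀⁻¹ * ·) (π₀ * ·) ?_ ?_ (fun π _ => by simp) (fun σ _ => by simp)
    · intro π hπ
      simp only [S, coe_filter, Set.mem_ofPred_eq, mem_filter, mem_univ, true_and] at hπ ⊢
      intro a ha
      have : π a = π₀ a := by rw [hπ₀ a ha, ← hπ.2]
      rw [Perm.mul_apply, this]; exact π₀.symm_apply_apply a
    · intro σ hσ
      simp only [S, coe_filter, Set.mem_ofPred_eq, mem_filter, mem_univ, true_and] at hσ ⊢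
      refine ⟨fun a ha => ?_, funext fun a => ?_⟩
      · simp [Perm.mul_apply, hσ a ha, hπ₀ a ha, hgB]
      · simp [restrict, Perm.mul_apply, hσ a a.2, hπ₀ a.1 a.2]
  rw [card_eq_sum_card_fiberwise hrestrict, sum_congr rfl hfiber, sum_const, hT,
    card_injective_mapsTo, smul_eq_mul]

end PermCounting

section FirstBelow

variable {n : ℕ}

theorem card_perm_forall_le {m : ℕ} (hmn : m ≤ n) (A : Finset (Fin n)) :
    #{π : Perm (Fin n) | ∀ b ∈ A, m ≤ (π b : ℕ)} = (n - m).descFactorial #A * (n - #A)! := by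
  have hcard : #{x : Fin n | m ≤ (x : ℕ)} = n - m := by
    have := card_filter_add_card_filter_not (s := univ) (p := fun x : Fin n => (x : ℕ) < m)
    simp only [Fin.card_filter_val_lt, not_lt, card_univ, Fintype.card_fin] at this
    omega
  simpa [hcard] using card_perm_mapsTo A {x : Fin n | m ≤ (x : ℕ)}

/-- Each permutation with some point of `A` below `m` ranks exactly one `a ∈ A` first, and
right-multiplying by a transposition moves this role between points of `A`. -/
theorem card_mul_card_perm_first_lt (m : ℕ) {v : Fin n} {A : Finset (Fin n)} (hv : v ∈ A) :
    #A * #{π : Perm (Fin n) | (π v : ℕ) < m ∧ ∀ b ∈ A.erase v, (π v : ℕ) < π b}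
      = #{π : Perm (Fin n) | ∃ b ∈ A, (π b : ℕ) < m} := by
  set S : Fin n → Finset (Perm (Fin n)) :=
    fun a => {π | (π a : ℕ) < m ∧ ∀ b ∈ A.erase a, (π a : ℕ) < π b}
  have hswap : ∀ a ∈ A, ∀ c ∈ A, ∀ π ∈ S a, π * swap c a ∈ S c := by
    intro a ha c hc π hπ
    simp only [S, mem_filter, mem_univ, true_and, Perm.mul_apply, swap_apply_left,
      mem_erase] at hπ ⊢
    refine ⟨hπ.1, fun b ⟨hbc, hbA⟩ => ?_⟩
    rcases eq_or_ne b a with rfl | hba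
    · rw [swap_apply_right]; exact hπ.2 c ⟨Ne.symm hbc, hc⟩
    · rw [swap_apply_of_ne_of_ne hbc hba]; exact hπ.2 b ⟨hba, hbA⟩
  have hcard : ∀ a ∈ A, #(S a) = #(S v) := fun a ha =>
    card_nbij' (· * swap v a) (· * swap a v) (hswap a ha v hv) (hswap v hv a ha)
      (fun π _ => by simp [mul_assoc, swap_comm]) (fun π _ => by simp [mul_assoc, swap_comm])
  have hdisj : (A : Set (Fin n)).PairwiseDisjoint S := by
    intro a ha c hc hac
    refine disjoint_left.mpr fun π hπa hπc => ?_
    simp only [S, mem_filter, mem_univ, true_and, mem_erase] at hπa hπc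
    exact lt_asymm (hπa.2 c ⟨Ne.symm hac, hc⟩) (hπc.2 a ⟨hac, ha⟩)
  have hunion : A.biUnion S = ({π | ∃ b ∈ A, (π b : ℕ) < m} : Finset (Perm (Fin n))) := by
    ext π
    simp only [S, mem_biUnion, mem_filter, mem_univ, true_and, mem_erase]
    refine ⟨fun ⟨a, ha, hlt, _⟩ => ⟨a, ha, hlt⟩, fun ⟨b, hb, hbm⟩ => ?_⟩
    obtain ⟨a, ha, hmin⟩ := exists_min_image A (fun x => (π x : ℕ)) ⟨b, hb⟩
    refine ⟨a, ha, (hmin b hb).trans_lt hbm, fun c ⟨hca, hcA⟩ => ?_⟩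
    exact (hmin c hcA).lt_of_ne fun h => hca (π.injective (Fin.ext h)).symm
  rw [← hunion, card_biUnion hdisj, sum_congr rfl hcard, sum_const, smul_eq_mul]

theorem card_mul_card_perm_first_add {m : ℕ} (hmn : m ≤ n) {v : Fin n} {A : Finset (Fin n)}
    (hv : v ∈ A) :
    #A * #{π : Perm (Fin n) | (π v : ℕ) < m ∧ ∀ b ∈ A.erase v, (π v : ℕ) < π b}
      + (n - m).descFactorial #A * (n - #A)! = n ! := by
  rw [card_mul_card_perm_first_lt m hv, ← card_perm_forall_le hmn]
  simpa [Fintype.card_perm] using card_filter_add_card_filter_not (s := univ)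
    (p := fun π : Perm (Fin n) => ∃ b ∈ A, (π b : ℕ) < m)

end FirstBelow

section DiscreteJensen

variable {R : Type*} [CommRing R] [LinearOrder R] [IsStrictOrderedRing R] {N d : ℕ} {H : ℕ → R}

theorem exists_supporting_line_of_convex
    (hH : ∀ j, j + 2 ≤ N → 2 * H (j + 1) ≤ H (j + 2) + H j) (hd : d ≤ N) :
    ∃ s : R, ∀ x ≤ N, H d + ((x : R) - d) * s ≤ H x := by
  set Δ : ℕ → R := fun j => H (j + 1) - H j
  have hΔ : ∀ i j, i ≤ j → j + 1 ≤ N → Δ i ≤ Δ j := by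
    intro i j hij hj
    induction j, hij using Nat.le_induction with
    | base => rfl
    | succ j hij ih => exact (ih (by omega)).trans (by linarith [hH j hj])
  refine ⟨Δ (min d (N - 1)), fun x hx => ?_⟩
  rcases le_total d x with hdx | hxd
  · have : #(Ico d x) • Δ (min d (N - 1)) ≤ ∑ j ∈ Ico d x, Δ j :=
      card_nsmul_le_sum _ _ _ fun j hj => by
        rw [mem_Ico] at hj; exact hΔ _ _ (by omega) (by omega)
    rw [sum_Ico_sub H hdx, Nat.card_Ico, nsmul_eq_mul, Nat.cast_sub hdx] at this
    linarith
  · have : ∑ j ∈ Ico x d, Δ j ≤ #(Ico x d) • Δ (min d (N - 1)) :=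
      sum_le_card_nsmul _ _ _ fun j hj => by
        rw [mem_Ico] at hj; exact hΔ _ _ (by omega) (by omega)
    rw [sum_Ico_sub H hxd, Nat.card_Ico, nsmul_eq_mul, Nat.cast_sub hxd] at this
    linarith

theorem card_mul_le_sum_of_convex {ι : Type*} [Fintype ι]
    (hH : ∀ j, j + 2 ≤ N → 2 * H (j + 1) ≤ H (j + 2) + H j) (hd : d ≤ N)
    (f : ι → ℕ) (hf : ∀ i, f i ≤ N) (hsum : ∑ i, f i = Fintype.card ι * d) :
    Fintype.card ι * H d ≤ ∑ i, H (f i) := by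
  obtain ⟨s, hs⟩ := exists_supporting_line_of_convex hH hd
  have hsumR : ∑ i, (f i : R) = Fintype.card ι * d := by exact_mod_cast hsum
  calc (Fintype.card ι : R) * H d = ∑ i, (H d + ((f i : R) - d) * s) := by
        simp only [sum_add_distrib, ← sum_mul, sum_sub_distrib, hsumR, sum_const, card_univ,
          nsmul_eq_mul, sub_self, zero_mul, add_zero]
    _ ≤ ∑ i, H (f i) := sum_le_sum fun i _ => hs _ (hf i)

end DiscreteJensen

/-- The number of permutations of `Fin n` placing a given vertex with `δ` neighbours at a position
`k < m` before all of them: the neighbours go to the `n - 1 - k` later positions, the other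
vertices anywhere. -/
def greedyPickCount (n m δ : ℕ) : ℕ :=
  ∑ k ∈ range m, (n - 1 - k).descFactorial δ * (n - 1 - δ)!

section GreedyPickCount

variable {n m : ℕ}

theorem succ_mul_greedyPickCount_add {δ : ℕ} (hmn : m ≤ n) (hδ : δ < n) :
    (δ + 1) * greedyPickCount n m δ + (n - m).descFactorial (δ + 1) * (n - 1 - δ)! = n ! := by
  rw [greedyPickCount, ← sum_mul, ← mul_assoc, ← add_mul,
    Nat.succ_mul_sum_descFactorial_add δ hmn, ← Nat.factorial_mul_descFactorial hδ, mul_comm,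
    Nat.sub_sub, add_comm 1]

theorem card_perm_first_eq_greedyPickCount (hmn : m ≤ n) {v : Fin n} {N : Finset (Fin n)}
    (hv : v ∉ N) :
    #{π : Perm (Fin n) | (π v : ℕ) < m ∧ ∀ u ∈ N, (π v : ℕ) < π u} = greedyPickCount n m #N := by
  have hfirst := card_mul_card_perm_first_add hmn (mem_insert_self v N)
  rw [erase_insert hv, card_insert_of_notMem hv] at hfirst
  have hN : #N < n := by
    simpa [card_insert_of_notMem hv] using card_le_univ (insert v N)
  have hcount := succ_mul_greedyPickCount_add hmn hN
  rw [show n - (#N + 1) = n - 1 - #N by omega] at hfirst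
  exact Nat.eq_of_mul_eq_mul_left (by omega : 0 < #N + 1) (by omega)

theorem sum_card_greedy_eq_sum_greedyPickCount (hmn : m ≤ n) (G : SimpleGraph (Fin n))
    [DecidableRel G.Adj] :
    ∑ π : Perm (Fin n), #{v | (π v : ℕ) < m ∧ ∀ u ∈ G.neighborFinset v, (π v : ℕ) < π u}
      = ∑ v, greedyPickCount n m (G.degree v) := by
  simp_rw [card_filter]
  rw [sum_comm]
  simp_rw [← card_filter]
  exact sum_congr rfl fun v _ =>
    card_perm_first_eq_greedyPickCount hmn (G.notMem_neighborFinset_self v)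

theorem two_mul_greedyPickCount_le {j : ℕ} (hj : j + 2 ≤ n - 1) :
    2 * greedyPickCount n m (j + 1) ≤ greedyPickCount n m (j + 2) + greedyPickCount n m j := by
  simp only [greedyPickCount, mul_sum, ← sum_add_distrib]
  exact sum_le_sum fun k _ => Nat.two_mul_descFactorial_mul_factorial_le (by omega) hj

theorem one_sub_prod_eq_greedyPickCount_div {d : ℕ} (hmn : m ≤ n) (hdn : d < n) :
    1 - ∏ i ∈ Icc 1 m, (((n : ℝ) - d - i) / ((n : ℝ) + 1 - i))
      = (d + 1) * greedyPickCount n m d / n ! := by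
  have htel : ((d + 1) * greedyPickCount n m d + (n - m).descFactorial (d + 1) * (n - 1 - d)! : ℝ)
      = n ! := by exact_mod_cast succ_mul_greedyPickCount_add hmn hdn
  have hfact : ((n - 1 - d)! * n.descFactorial (d + 1) : ℝ) = n ! := by
    rw [Nat.sub_sub, add_comm 1]; exact_mod_cast Nat.factorial_mul_descFactorial hdn
  have hD : (n.descFactorial (d + 1) : ℝ) ≠ 0 := by
    exact_mod_cast (Nat.descFactorial_pos.mpr hdn).ne'
  rw [prod_Icc_sub_div_sub_eq_descFactorial_div hmn hdn]
  field_simp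
  linear_combination (-(n.descFactorial (d + 1) : ℝ)) * htel
    + ((n - m).descFactorial (d + 1) : ℝ) * hfact

end GreedyPickCount

theorem stmt11_general (n d m : ℕ) (hm1 : 1 ≤ m) (hmn : m ≤ n)
    (G : SimpleGraph (Fin n)) [DecidableRel G.Adj]
    (hd : ∑ v : Fin n, G.degree v = n * d) :
    1 - ((∑ π : Equiv.Perm (Fin n), ((Finset.univ.filter (fun v : Fin n =>
          (π v : ℕ) < m ∧ ∀ u ∈ G.neighborFinset v, (π v : ℕ) < (π u : ℕ))).card : ℝ))
        / (Nat.factorial n : ℝ)) / m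
    ≤ 1 - ((n : ℝ) / (m * ((d : ℝ) + 1)))
        * (1 - ∏ i ∈ Finset.Icc 1 m, (((n:ℝ) - d - i) / ((n:ℝ) + 1 - i))) := by
  have hdeg (v : Fin n) : G.degree v ≤ n - 1 :=
    Nat.le_sub_one_of_lt (by simpa using G.degree_lt_card_verts v)
  have hdn : d < n := by
    have : n * d ≤ n * (n - 1) := by
      rw [← hd]; simpa using sum_le_sum fun v (_ : v ∈ univ) => hdeg v
    have := Nat.le_of_mul_le_mul_left this (by omega)
    omega
  have hjensen :
      (n : ℝ) * greedyPickCount n m d ≤ ∑ v, (greedyPickCount n m (G.degree v) : ℝ) := by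
    simpa using card_mul_le_sum_of_convex (H := fun δ => (greedyPickCount n m δ : ℝ))
      (fun j hj => by exact_mod_cast two_mul_greedyPickCount_le hj) (by omega : d ≤ n - 1)
      (fun v => G.degree v) hdeg (by rw [Fintype.card_fin]; exact hd)
  rw [one_sub_prod_eq_greedyPickCount_div hmn hdn, sub_le_sub_iff_left, div_div, ← Nat.cast_sum,
    sum_card_greedy_eq_sum_greedyPickCount hmn G]
  push_cast
  calc (n : ℝ) / (m * (d + 1)) * ((d + 1) * greedyPickCount n m d / n !)
      = n * greedyPickCount n m d / (n ! * m) := by field_simp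
    _ ≤ _ := by gcongr

/-- Worst-case bound on the conflict ratio: for a graph with `n` vertices and average
degree `d` with `(d+1) ∣ n`,
`r̄(m) = 1 − ES_m(G)/m ≤ 1 − (n/(m(d+1)))·(1 − ∏_{i=1}^m (n−d−i)/(n+1−i))`. -/
theorem stmt11 (n d m : ℕ) (hm1 : 1 ≤ m) (hmn : m ≤ n) (hdvd : (d + 1) ∣ n)
    (G : SimpleGraph (Fin n)) [DecidableRel G.Adj]
    (hd : ∑ v : Fin n, G.degree v = n * d) :
    1 - ((∑ π : Equiv.Perm (Fin n), ((Finset.univ.filter (fun v : Fin n =>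
          (π v : ℕ) < m ∧ ∀ u ∈ G.neighborFinset v, (π v : ℕ) < (π u : ℕ))).card : ℝ))
        / (Nat.factorial n : ℝ)) / m
    ≤ 1 - ((n : ℝ) / (m * ((d : ℝ) + 1)))
        * (1 - ∏ i ∈ Finset.Icc 1 m, (((n:ℝ) - d - i) / ((n:ℝ) + 1 - i))) :=
  stmt11_general n d m hm1 hmn G hd
end

section
/- Let G be a finite simple graph with n vertices and define k̄(m) = m − ES_m(G), where ES_m(G) is the expected size of the greedy independent set among the first m vertices of a uniformly random permutation. Then k̄ is nondecreasing in m: k̄(m+1) ≥ k̄(m) for all 1 ≤ m < n. -/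
/-- The expected number of conflicting nodes `k̄(m) = m − ES_m(G)` is nondecreasing
in `m`, where `ES_m(G)` is the expected greedy independent-set size among the first
`m` positions of a uniformly random permutation. -/
theorem stmt13 (n : ℕ) (G : SimpleGraph (Fin n)) [DecidableRel G.Adj]
    (m : ℕ) (hm : 1 ≤ m) (hmn : m < n) :
    ((m : ℝ) + 1) - (∑ π : Equiv.Perm (Fin n), ((Finset.univ.filter (fun v : Fin n =>
        (π v : ℕ) < m + 1 ∧ ∀ u ∈ G.neighborFinset v, (π v : ℕ) < (π u : ℕ))).card : ℝ))
      / (Nat.factorial n : ℝ)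
    ≥ (m : ℝ) - (∑ π : Equiv.Perm (Fin n), ((Finset.univ.filter (fun v : Fin n =>
        (π v : ℕ) < m ∧ ∀ u ∈ G.neighborFinset v, (π v : ℕ) < (π u : ℕ))).card : ℝ))
      / (Nat.factorial n : ℝ) := by
  have hfac : (0:ℝ) < (Nat.factorial n : ℝ) := by positivity
  have hkey : ∀ π : Equiv.Perm (Fin n),
      (Finset.univ.filter (fun v : Fin n =>
        (π v : ℕ) < m + 1 ∧ ∀ u ∈ G.neighborFinset v, (π v : ℕ) < (π u : ℕ))).card
      ≤ (Finset.univ.filter (fun v : Fin n =>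
        (π v : ℕ) < m ∧ ∀ u ∈ G.neighborFinset v, (π v : ℕ) < (π u : ℕ))).card + 1 := by
    intro π
    have hsub : (Finset.univ.filter (fun v : Fin n =>
        (π v : ℕ) < m + 1 ∧ ∀ u ∈ G.neighborFinset v, (π v : ℕ) < (π u : ℕ)))
        ⊆ insert (π.symm ⟨m, hmn⟩) (Finset.univ.filter (fun v : Fin n =>
        (π v : ℕ) < m ∧ ∀ u ∈ G.neighborFinset v, (π v : ℕ) < (π u : ℕ))) := by
      intro v hv
      simp only [Finset.mem_filter, Finset.mem_univ, true_and] at hv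
      rcases Nat.lt_succ_iff_lt_or_eq.mp hv.1 with h | h
      · exact Finset.mem_insert_of_mem (by
          simp only [Finset.mem_filter, Finset.mem_univ, true_and]
          exact ⟨h, hv.2⟩)
      · have hπ : π v = ⟨m, hmn⟩ := Fin.ext h
        have : v = π.symm ⟨m, hmn⟩ := by rw [← hπ, Equiv.symm_apply_apply]
        rw [this]
        exact Finset.mem_insert_self _ _
    calc _ ≤ (insert (π.symm ⟨m, hmn⟩) (Finset.univ.filter (fun v : Fin n =>
        (π v : ℕ) < m ∧ ∀ u ∈ G.neighborFinset v, (π v : ℕ) < (π u : ℕ)))).card :=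
          Finset.card_le_card hsub
      _ ≤ _ := Finset.card_insert_le _ _
  have hsum : (∑ π : Equiv.Perm (Fin n), ((Finset.univ.filter (fun v : Fin n =>
        (π v : ℕ) < m + 1 ∧ ∀ u ∈ G.neighborFinset v, (π v : ℕ) < (π u : ℕ))).card : ℝ))
      ≤ (∑ π : Equiv.Perm (Fin n), ((Finset.univ.filter (fun v : Fin n =>
        (π v : ℕ) < m ∧ ∀ u ∈ G.neighborFinset v, (π v : ℕ) < (π u : ℕ))).card : ℝ))
      + (Nat.factorial n : ℝ) := by
    have hcard : ((Finset.univ : Finset (Equiv.Perm (Fin n))).card : ℝ)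
        = (Nat.factorial n : ℝ) := by
      rw [Finset.card_univ, Fintype.card_perm, Fintype.card_fin]
    calc _ ≤ ∑ π : Equiv.Perm (Fin n), (((Finset.univ.filter (fun v : Fin n =>
          (π v : ℕ) < m ∧ ∀ u ∈ G.neighborFinset v, (π v : ℕ) < (π u : ℕ))).card : ℝ) + 1) :=
        Finset.sum_le_sum (fun π _ => by exact_mod_cast hkey π)
      _ = _ := by rw [Finset.sum_add_distrib, Finset.sum_const, nsmul_eq_mul, mul_one, hcard]
  have h1 : (∑ π : Equiv.Perm (Fin n), ((Finset.univ.filter (fun v : Fin n =>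
        (π v : ℕ) < m + 1 ∧ ∀ u ∈ G.neighborFinset v, (π v : ℕ) < (π u : ℕ))).card : ℝ))
      / (Nat.factorial n : ℝ)
      ≤ (∑ π : Equiv.Perm (Fin n), ((Finset.univ.filter (fun v : Fin n =>
        (π v : ℕ) < m ∧ ∀ u ∈ G.neighborFinset v, (π v : ℕ) < (π u : ℕ))).card : ℝ))
      / (Nat.factorial n : ℝ) + 1 := by
    rw [div_add' _ _ _ (ne_of_gt hfac)]
    gcongr
    linarith

  linarith
end

section
/- Let n ≥ 1 and consider ES_m(K^n_d) = ∑_{j=1}^{m} ∏_{i=1}^{j-1} (n−i−d)/(n−i) for the disjoint union of n/(d+1) cliques of size d+1. This closed form satisfies ES_m(K^n_d) = (n/(d+1)) · (1 − ∏_{i=1}^{m} (n−d−i)/(n+1−i)) for all 1 ≤ m ≤ n − d. -/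
/-!
Write `t_j = ∏_{i<j} (x-i-c)/(x-i)` and `P_j = ∏_{i≤j} (x-c-i)/(x+1-i)`. Since
`∏_{i≤j} (x+1-i) = x ∏_{i<j} (x-i)`, one has `x P_{j-1} = (x-j+1) t_j` and `x P_j = (x-c-j) t_j`,
so `x (P_{j-1} - P_j) = (c+1) t_j` and the sum of the `t_j` telescopes to `x (1 - P_m) / (c+1)`.
-/

open Finset

section Telescoping

variable {K : Type*} [Field K] (x c : K)

theorem mul_prod_Icc_div_add_one_sub (k : ℕ) (hx : ∀ i ≤ k, x - i ≠ 0) :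
    x * ∏ i ∈ Icc 1 k, (x - c - i) / (x + 1 - i)
      = (x - k) * ∏ i ∈ Icc 1 k, (x - i - c) / (x - i) := by
  induction k with
  | zero => simp
  | succ k ih =>
    have hk : x - k ≠ 0 := hx k (by omega)
    have hk1 : x - (k + 1 : ℕ) ≠ 0 := hx (k + 1) le_rfl
    rw [prod_Icc_succ_top (by omega), prod_Icc_succ_top (by omega), ← mul_assoc,
      ih fun i hi => hx i (by omega)]
    generalize ∏ i ∈ Icc 1 k, (x - i - c) / (x - i) = Q
    push_cast at hk1 ⊢
    rw [show x + 1 - (k + 1) = x - k by ring]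
    field_simp
    ring

theorem mul_prod_Icc_div_sub_succ (k : ℕ) (hx : ∀ i ≤ k, x - i ≠ 0) :
    x * (∏ i ∈ Icc 1 k, (x - c - i) / (x + 1 - i)
        - ∏ i ∈ Icc 1 (k + 1), (x - c - i) / (x + 1 - i))
      = (c + 1) * ∏ i ∈ Icc 1 k, (x - i - c) / (x - i) := by
  have hk : x - k ≠ 0 := hx k le_rfl
  rw [prod_Icc_succ_top (by omega), mul_sub, ← mul_assoc,
    mul_prod_Icc_div_add_one_sub x c k hx]
  generalize ∏ i ∈ Icc 1 k, (x - i - c) / (x - i) = Q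
  push_cast
  rw [show x + 1 - (k + 1) = x - k by ring]
  field_simp
  ring

theorem add_one_mul_sum_prod_Icc_div (m : ℕ) (hx : ∀ i < m, x - i ≠ 0) :
    (c + 1) * ∑ j ∈ Icc 1 m, ∏ i ∈ Icc 1 (j - 1), (x - i - c) / (x - i)
      = x * (1 - ∏ i ∈ Icc 1 m, (x - c - i) / (x + 1 - i)) := by
  induction m with
  | zero => simp
  | succ m ih =>
    rw [sum_Icc_succ_top (by omega), mul_add, ih fun i hi => hx i (by omega),
      Nat.add_sub_cancel, ← mul_prod_Icc_div_sub_succ x c m fun i hi => hx i (by omega)]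
    ring

end Telescoping

theorem stmt17_general (n d m : ℕ)
    (hm : m ≤ n - d) :
    ∑ j ∈ Finset.Icc 1 m, ∏ i ∈ Finset.Icc 1 (j - 1),
        (((n:ℝ) - i - d) / ((n:ℝ) - i))
    = ((n : ℝ) / ((d : ℝ) + 1))
      * (1 - ∏ i ∈ Finset.Icc 1 m, (((n:ℝ) - d - i) / ((n:ℝ) + 1 - i))) := by
  have hsum := add_one_mul_sum_prod_Icc_div (n : ℝ) d m fun i hi =>
    sub_ne_zero.mpr (by exact_mod_cast (show n ≠ i by omega))
  rw [div_mul_eq_mul_div, eq_div_iff (by positivity), mul_comm, hsum]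

/-- Closed form for `ES_m(K^n_d)`:
`∑_{j=1}^m ∏_{i=1}^{j-1} (n−i−d)/(n−i) = (n/(d+1))·(1 − ∏_{i=1}^m (n−d−i)/(n+1−i))`. -/
theorem stmt17 (n d m : ℕ) (hn : 1 ≤ n) (hdvd : (d + 1) ∣ n) (hdn : d + 1 ≤ n)
    (hm1 : 1 ≤ m) (hm : m ≤ n - d) :
    ∑ j ∈ Finset.Icc 1 m, ∏ i ∈ Finset.Icc 1 (j - 1),
        (((n:ℝ) - i - d) / ((n:ℝ) - i))
    = ((n : ℝ) / ((d : ℝ) + 1))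
      * (1 - ∏ i ∈ Finset.Icc 1 m, (((n:ℝ) - d - i) / ((n:ℝ) + 1 - i))) :=
  stmt17_general n d m hm
end
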